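/- arXiv:2512.16190 — 4 statements merged into one kernel-verified Lean document; each statement's English description precedes it below -/
import Mathlib

section
/- Let q be a positive even integer such that q/2 is odd (i.e., q ≡ 2 mod 4). Then for every integer n, c_q(2n) = (−1)^n · c_q(n). -/
open Finset Complex

noncomputable def ramanujanSum (q : ℕ) (n : ℤ) : ℂ :=
  ∑ k ∈ (Finset.Icc 1 q).filter (fun k => Nat.gcd k q = 1),
    Complex.exp (2 * (Real.pi : ℂ) * Complex.I * (k : ℂ) * (n : ℂ) / (q : ℂ))

/-!
Write `q = 2m` with `m` odd. Then `m + 2` is odd and coprime to `m`, hence a unit mod `q`,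
so `c_q((m + 2) n) = c_q(n)` because multiplication by it permutes the units. Every unit `u`
is odd, so `u m = m` in `ZMod q`, and the summand `e(u (m + 2) n / q)` splits as
`e(m n / q) e(2 u n / q) = (-1)^n e(u (2n) / q)`. Hence `c_q(n) = (-1)^n c_q(2n)`.
-/

open ZMod

section Units

variable {q : ℕ} [NeZero q]

-- The inverse of `k ↦ k mod q` is `u ↦ (u - 1).val + 1`, which lands in `[1, q]`, not `[0, q)`.
lemma sum_coprime_Icc_eq_sum_units {M : Type*} [AddCommMonoid M] (f : ZMod q → M) :
    ∑ k ∈ (Icc 1 q).filter (fun k => Nat.gcd k q = 1), f k = ∑ u : (ZMod q)ˣ, f u := by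
  refine sum_bij' (fun k hk => unitOfCoprime k (mem_filter.mp hk).2)
    (fun u _ => ((u : ZMod q) - 1).val + 1) (fun _ _ => mem_univ _) ?_ ?_ ?_ ?_
  · intro u _
    have hcast : ((((u : ZMod q) - 1).val + 1 : ℕ) : ZMod q) = u := by simp
    refine mem_filter.mpr ⟨mem_Icc.mpr ⟨by omega, val_lt _⟩, ?_⟩
    rw [← Nat.Coprime, ← isUnit_iff_coprime, hcast]
    exact u.isUnit
  · intro k hk
    obtain ⟨hk1, hkq⟩ := mem_Icc.mp (mem_filter.mp hk).1
    obtain ⟨j, rfl⟩ : ∃ j, k = j + 1 := ⟨k - 1, by omega⟩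
    simp [val_cast_of_lt (show j < q by omega)]
  · intro u _
    ext
    simp
  · intro k _
    simp

lemma ramanujanSum_eq_sum_units (n : ℤ) :
    ramanujanSum q n = ∑ u : (ZMod q)ˣ, stdAddChar ((u : ZMod q) * (n : ZMod q)) := by
  rw [ramanujanSum, ← sum_coprime_Icc_eq_sum_units fun x => stdAddChar (x * (n : ZMod q))]
  refine sum_congr rfl fun k _ => ?_
  rw [show (k : ZMod q) * n = ((k * n : ℤ) : ZMod q) by push_cast; rfl, stdAddChar_coe]
  push_cast
  ring_nf

lemma ramanujanSum_mul_of_isUnit {a : ℤ} (ha : IsUnit (a : ZMod q)) (n : ℤ) :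
    ramanujanSum q (a * n) = ramanujanSum q n := by
  simp only [ramanujanSum_eq_sum_units]
  exact Fintype.sum_equiv (Equiv.mulRight ha.unit) _ _ fun u => by simp [mul_assoc]

end Units

section TwiceOdd

variable {m : ℕ}

lemma units_mul_natCast_half [NeZero m] (u : (ZMod (2 * m))ˣ) : (u : ZMod (2 * m)) * m = m := by
  obtain ⟨j, hj⟩ : Odd (u : ZMod (2 * m)).val :=
    Nat.coprime_two_right.mp ((val_coe_unit_coprime u).coprime_mul_right_right)
  rw [← natCast_zmod_val (u : ZMod (2 * m)), hj]
  push_cast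
  rw [show (2 * j + 1 : ZMod (2 * m)) * m = j * ((2 * m : ℕ) : ZMod (2 * m)) + m by
    push_cast; ring, natCast_self, mul_zero, zero_add]

lemma stdAddChar_natCast_half [NeZero m] : stdAddChar (m : ZMod (2 * m)) = -1 := by
  rw [show (m : ZMod (2 * m)) = ((m : ℤ) : ZMod (2 * m)) by simp, stdAddChar_coe]
  rw [show 2 * (Real.pi : ℂ) * I * ((m : ℤ) : ℂ) / ((2 * m : ℕ) : ℂ) = Real.pi * I by
    have : (m : ℂ) ≠ 0 := NeZero.ne _
    push_cast; field_simp]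
  exact exp_pi_mul_I

lemma isUnit_add_two_of_odd (hm : Odd m) : IsUnit ((m + 2 : ℤ) : ZMod (2 * m)) := by
  rw [show ((m + 2 : ℤ) : ZMod (2 * m)) = ((m + 2 : ℕ) : ZMod (2 * m)) by push_cast; rfl,
    isUnit_iff_coprime]
  refine Nat.Coprime.mul_right ?_ ?_
  · exact Nat.coprime_two_right.mpr (hm.add_even even_two)
  · simpa using (Nat.coprime_add_mul_left_left 2 m 1).mpr (Nat.coprime_two_left.mpr hm)

end TwiceOdd

theorem ramanujanSum_double_arg_general (q : ℕ) (heven : 2 ∣ q)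
    (hodd : Odd (q / 2)) (n : ℤ) :
    ramanujanSum q (2 * n) = (-1 : ℂ) ^ n * ramanujanSum q n := by
  obtain ⟨m, rfl⟩ := heven
  rw [Nat.mul_div_cancel_left m two_pos] at hodd
  have : NeZero m := ⟨hodd.pos.ne'⟩
  have key : ramanujanSum (2 * m) n = (-1) ^ n * ramanujanSum (2 * m) (2 * n) := by
    rw [← ramanujanSum_mul_of_isUnit (isUnit_add_two_of_odd hodd) n]
    simp only [ramanujanSum_eq_sum_units, mul_sum]
    refine sum_congr rfl fun u _ => ?_
    have hsplit : (u : ZMod (2 * m)) * (((m + 2 : ℤ) * n : ℤ) : ZMod (2 * m)) =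
        n • (m : ZMod (2 * m)) + u * ((2 * n : ℤ) : ZMod (2 * m)) := by
      push_cast
      linear_combination (n : ZMod (2 * m)) * units_mul_natCast_half u
    rw [hsplit, AddChar.map_add_eq_mul, AddChar.map_zsmul_eq_zpow, stdAddChar_natCast_half]
  rw [key, ← mul_assoc, ← mul_zpow]
  norm_num

theorem ramanujanSum_double_arg (q : ℕ) (hq : 0 < q) (heven : 2 ∣ q)
    (hodd : Odd (q / 2)) (n : ℤ) :
    ramanujanSum q (2 * n) = (-1 : ℂ) ^ n * ramanujanSum q n :=
  ramanujanSum_double_arg_general q heven hodd n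
end

section
/- Let N = 2d with d odd, let q be an even divisor of N, let k be coprime to q, and let n ∈ {0,1}. Then Σ_{ℓ=0}^{d−1} c_{q/2}(2ℓ+n)·e^{−2πi(2ℓ+n)k/q} = (−1)^n · N/2. -/
open Finset Complex

/-!
Write `q = 2m` and `e(x) = exp (2πix)`. Expanding `c_m`, the sum becomes
`∑_j ∑_ℓ e((2ℓ + n)(2j - k)/q)` over the reduced residues `j` mod `m`. As `m ∣ d`, the sum over
`ℓ` is a complete geometric sum of `m`-th roots of unity: it equals `d · e(n(2j - k)/q)` if
`m ∣ 2j - k` and vanishes otherwise. Since `m` is odd, exactly one reduced residue solves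
`2j ≡ k (mod m)`, and since `k` is odd, `(2j - k)/m` is odd, so `e(n(2j - k)/q) = (-1)^n`.
-/

open scoped Real

lemma exp_two_pi_I_mul_div_eq_zpow (m : ℕ) (a : ℤ) :
    exp (2 * π * I * a / m) = exp (2 * π * I / m) ^ a := by
  rw [← exp_int_mul]
  ring_nf

lemma sum_range_exp_two_pi_I_mul_div {m d : ℕ} (hmd : m ∣ d) (a : ℤ) :
    ∑ ℓ ∈ range d, exp (2 * π * I * ℓ * a / m) = if (m : ℤ) ∣ a then (d : ℂ) else 0 := by
  rcases eq_or_ne m 0 with rfl | hm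
  · simp [Nat.eq_zero_of_zero_dvd hmd]
  have hζ := isPrimitiveRoot_exp m hm
  set z := exp (2 * π * I / m) ^ a
  have hterm (ℓ : ℕ) : exp (2 * π * I * ℓ * a / m) = z ^ ℓ := by
    rw [← zpow_natCast, ← zpow_mul, ← exp_two_pi_I_mul_div_eq_zpow]
    push_cast
    ring_nf
  have hz : z ^ d = 1 := by
    obtain ⟨t, rfl⟩ := hmd
    rw [pow_mul, ← zpow_natCast z, ← zpow_mul, mul_comm a, zpow_mul, zpow_natCast,
      hζ.pow_eq_one, one_zpow, one_pow]
  simp_rw [hterm, ← hζ.zpow_eq_one_iff_dvd]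
  split_ifs with h
  · simp [z, h]
  · rw [geom_sum_eq h, hz, sub_self, zero_div]

lemma sum_range_exp_two_pi_I_mul_two_mul_add_div {m d : ℕ} (hmd : m ∣ d) (n : ℕ) (b : ℤ) :
    ∑ ℓ ∈ range d, exp (2 * π * I * ((2 * ℓ + n : ℕ) : ℂ) * b / ((2 * m : ℕ) : ℂ)) =
      exp (2 * π * I * n * b / ((2 * m : ℕ) : ℂ)) * if (m : ℤ) ∣ b then (d : ℂ) else 0 := by
  rw [← sum_range_exp_two_pi_I_mul_div hmd, mul_sum]
  refine sum_congr rfl fun ℓ _ => ?_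
  rw [← exp_add]
  push_cast
  ring_nf

lemma ramanujanSum_mul_exp_neg_eq_sum (m k a : ℕ) :
    ramanujanSum m a * exp (-(2 * π * I * a * k / ((2 * m : ℕ) : ℂ))) =
      ∑ j ∈ (Icc 1 m).filter (fun j => Nat.gcd j m = 1),
        exp (2 * π * I * a * ((2 * j - k : ℤ) : ℂ) / ((2 * m : ℕ) : ℂ)) := by
  rw [ramanujanSum, sum_mul]
  refine sum_congr rfl fun j _ => ?_
  rw [← exp_add]
  push_cast
  ring_nf

lemma exp_two_pi_I_mul_div_two_mul_eq_neg_one_pow {m : ℕ} (hm : m ≠ 0) {b : ℤ}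
    (hmb : (m : ℤ) ∣ b) (hb : Odd b) (n : ℕ) :
    exp (2 * π * I * n * b / ((2 * m : ℕ) : ℂ)) = (-1) ^ n := by
  obtain ⟨c, rfl⟩ := hmb
  have hc : Odd c := (Int.odd_mul.mp hb).2
  have hm' : (m : ℂ) ≠ 0 := Nat.cast_ne_zero.mpr hm
  have : 2 * π * I * n * ((m * c : ℤ) : ℂ) / ((2 * m : ℕ) : ℂ) = (c * n : ℤ) * (π * I) := by
    push_cast
    field_simp
  rw [this, exp_int_mul, exp_pi_mul_I, zpow_mul, hc.neg_one_zpow, zpow_natCast]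

lemma exists_mem_Icc_one_modEq {m : ℕ} (hm : 0 < m) (a : ℤ) :
    ∃ j ∈ Icc 1 m, (j : ℤ) ≡ a [ZMOD m] := by
  have hr₀ : 0 ≤ (a - 1) % m := Int.emod_nonneg _ (by omega)
  have hr₁ : (a - 1) % m < m := Int.emod_lt_of_pos _ (by omega)
  lift (a - 1) % m to ℕ using hr₀ with r hr
  refine ⟨r + 1, mem_Icc.mpr ⟨by omega, by omega⟩, ?_⟩
  have := (Int.mod_modEq (a - 1) m).add_right 1
  rw [← hr, sub_add_cancel] at this
  exact_mod_cast this

lemma Nat.Coprime.of_dvd_two_mul_sub {m j k : ℕ} (hk : Nat.Coprime k m)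
    (h : (m : ℤ) ∣ 2 * j - k) : Nat.Coprime j m := by
  obtain ⟨t, ht⟩ := h
  have hk' : IsCoprime (2 * j + m * (-t) : ℤ) m := by
    rw [show (2 * j + m * (-t) : ℤ) = k by linarith]
    exact Nat.isCoprime_iff_coprime.mpr hk
  rw [IsCoprime.add_mul_left_left_iff] at hk'
  exact Nat.isCoprime_iff_coprime.mp hk'.of_mul_left_right

lemma eq_of_mem_Icc_of_dvd_two_mul_sub {m j j' : ℕ} {k : ℤ} (hm : Odd m)
    (hj : j ∈ Icc 1 m) (hj' : j' ∈ Icc 1 m)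
    (h : (m : ℤ) ∣ 2 * j - k) (h' : (m : ℤ) ∣ 2 * j' - k) : j = j' := by
  have h2 : IsCoprime (m : ℤ) 2 := Nat.isCoprime_iff_coprime.mpr (Nat.coprime_two_right.mpr hm)
  have hdvd : (m : ℤ) ∣ j - j' :=
    h2.dvd_of_dvd_mul_left (by simpa [mul_sub] using dvd_sub h h')
  rw [mem_Icc] at hj hj'
  have := Int.eq_zero_of_abs_lt_dvd hdvd (abs_sub_lt_iff.mpr ⟨by omega, by omega⟩)
  omega

lemma exists_filter_dvd_two_mul_sub_eq_singleton {m k : ℕ} (hm : Odd m)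
    (hk : Nat.Coprime k m) :
    ∃ j₀ : ℕ, ((Icc 1 m).filter (fun j => Nat.gcd j m = 1)).filter
      (fun j : ℕ => (m : ℤ) ∣ 2 * j - k) = {j₀} := by
  obtain ⟨y, hy⟩ := Int.mod_coprime (Nat.coprime_two_left.mpr hm)
  obtain ⟨j₀, hj₀, hj₀y⟩ := exists_mem_Icc_one_modEq hm.pos (k * y)
  have hdvd : (m : ℤ) ∣ 2 * j₀ - k := by
    refine Int.ModEq.dvd ?_
    calc (k : ℤ) = k * 1 := (mul_one _).symm
      _ ≡ k * (2 * y) [ZMOD m] := hy.symm.mul_left _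
      _ = 2 * (k * y) := by ring
      _ ≡ 2 * j₀ [ZMOD m] := (hj₀y.mul_left 2).symm
  refine ⟨j₀, eq_singleton_iff_unique_mem.mpr ⟨?_, fun j hj => ?_⟩⟩
  · exact mem_filter.mpr ⟨mem_filter.mpr ⟨hj₀, hk.of_dvd_two_mul_sub hdvd⟩, hdvd⟩
  · obtain ⟨hjF, hjdvd⟩ := mem_filter.mp hj
    exact eq_of_mem_Icc_of_dvd_two_mul_sub hm (mem_filter.mp hjF).1 hj₀ hjdvd hdvd

theorem zak_half_value_general (N d q k : ℕ) (hN : N = 2 * d) (hd : Odd d)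
    (hq : q ∣ N) (hqeven : 2 ∣ q)
    (hk : Nat.gcd k q = 1) (n : ℕ) :
    ∑ ℓ ∈ Finset.range d,
      ramanujanSum (q / 2) ((2 * ℓ + n : ℕ) : ℤ) *
        Complex.exp (-(2 * (Real.pi : ℂ) * Complex.I * ((2 * ℓ + n : ℕ) : ℂ) * (k : ℂ) / (q : ℂ))) =
      (-1 : ℂ) ^ n * (N : ℂ) / 2 := by
  obtain ⟨m, rfl⟩ := hqeven
  subst hN
  have hmd : m ∣ d := Nat.dvd_of_mul_dvd_mul_left two_pos hq
  have hm : Odd m := hd.of_dvd_nat hmd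
  have hk₂ : Odd k := Nat.coprime_two_right.mp (Nat.Coprime.coprime_mul_right_right hk)
  obtain ⟨j₀, hj₀⟩ :=
    exists_filter_dvd_two_mul_sub_eq_singleton hm (Nat.Coprime.coprime_mul_left_right hk)
  have hj₀dvd : (m : ℤ) ∣ 2 * j₀ - k := (mem_filter.mp (hj₀ ▸ mem_singleton_self j₀ :)).2
  have hodd : Odd (2 * j₀ - k : ℤ) := (even_two_mul _).sub_odd (by exact_mod_cast hk₂)
  rw [Nat.mul_div_cancel_left m two_pos]
  simp_rw [ramanujanSum_mul_exp_neg_eq_sum]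
  rw [sum_comm]
  simp_rw [sum_range_exp_two_pi_I_mul_two_mul_add_div hmd, mul_ite, mul_zero]
  rw [← sum_filter, hj₀, sum_singleton,
    exp_two_pi_I_mul_div_two_mul_eq_neg_one_pow hm.pos.ne' hj₀dvd hodd]
  push_cast
  ring

theorem zak_half_value (N d q k : ℕ) (hN : N = 2 * d) (hd : Odd d)
    (hq : q ∣ N) (hqeven : 2 ∣ q) (hq0 : 0 < q)
    (hk : Nat.gcd k q = 1) (n : ℕ) (hn : n = 0 ∨ n = 1) :
    ∑ ℓ ∈ Finset.range d,
      ramanujanSum (q / 2) ((2 * ℓ + n : ℕ) : ℤ) *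
        Complex.exp (-(2 * (Real.pi : ℂ) * Complex.I * ((2 * ℓ + n : ℕ) : ℂ) * (k : ℂ) / (q : ℂ))) =
      (-1 : ℂ) ^ n * (N : ℂ) / 2 :=
  zak_half_value_general N d q k hN hd hq hqeven hk n
end

section
/- (Tight frame R_{1,N}) Let N ≥ 1 and let q_1, …, q_K be all divisors of N. For x ∈ ℓ²(Z_N) and m ∈ Z_N, let L_m x denote the circular shift (L_m x)(n) = x(n−m mod N). Then the collection {L_k c_{q_i} : 0 ≤ k ≤ N−1, 1 ≤ i ≤ K} is a tight frame for ℓ²(Z_N) with bound N²; that is, for all x ∈ ℝ^N (or ℂ^N), Σ_{i=1}^{K} Σ_{k=0}^{N−1} |⟨x, L_k c_{q_i}⟩|² = N²·‖x‖². -/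
open Finset Complex

/-!
Over `ZMod N` with `e = ZMod.stdAddChar`, the Ramanujan sum is `c_q(m) = ∑ e(j m)`, the sum running
over the elements `j` of additive order `q` (these are the `k N / q` with `k` prime to `q`).
Hence `⟨x, L_k c_q⟩ = ∑_{ord j = q} x̂(j) e(j k)`, where `x̂` is the discrete Fourier transform of
`x`. Orthogonality of the characters gives `∑_k |⟨x, L_k c_q⟩|² = N ∑_{ord j = q} |x̂(j)|²`;
since the orders of the elements of `ZMod N` run exactly over the divisors of `N`, summing over
`q` gives `N ∑_j |x̂(j)|²`, which is `N² ‖x‖²` by Parseval, i.e. orthogonality once more.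
-/

namespace AddChar

variable {R : Type*} [CommRing R] [Fintype R]

lemma conj_apply (ψ : AddChar R ℂ) (a : R) : starRingEnd ℂ (ψ a) = ψ (-a) := by
  have hchar : 0 < ringChar R := Nat.pos_of_ne_zero (CharP.char_ne_zero_of_finite R _)
  rw [starComp_apply hchar, inv_apply]

lemma IsPrimitive.sum_norm_sq_sum_mul_apply_mul {ψ : AddChar R ℂ} (hψ : ψ.IsPrimitive)
    {ι : Type*} {s : Finset ι} {φ : ι → R} (hφ : Set.InjOn φ s) (a : ι → ℂ) :
    ∑ k, ‖∑ i ∈ s, a i * ψ (φ i * k)‖ ^ 2 = Fintype.card R * ∑ i ∈ s, ‖a i‖ ^ 2 := by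
  classical
  apply Complex.ofReal_injective
  push_cast
  simp_rw [← Complex.mul_conj', map_sum, map_mul, conj_apply, sum_mul_sum, mul_sum]
  calc ∑ k, ∑ i ∈ s, ∑ i' ∈ s, a i * ψ (φ i * k) * (starRingEnd ℂ (a i') * ψ (-(φ i' * k)))
      = ∑ i ∈ s, ∑ i' ∈ s, a i * starRingEnd ℂ (a i') * ∑ k, ψ (k * (φ i - φ i')) := by
        rw [sum_comm]
        refine sum_congr rfl fun i _ ↦ ?_
        rw [sum_comm]
        refine sum_congr rfl fun i' _ ↦ ?_
        rw [mul_sum]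
        refine sum_congr rfl fun k _ ↦ ?_
        rw [mul_sub, mul_comm k, mul_comm k, sub_eq_add_neg, map_add_eq_mul]
        ring
    _ = ∑ i ∈ s, Fintype.card R * (a i * starRingEnd ℂ (a i)) := by
        refine sum_congr rfl fun i hi ↦ ?_
        simp only [fun i' ↦ sum_mulShift (φ i - φ i') hψ]
        rw [sum_eq_single_of_mem i hi fun i' hi' hne ↦ ?_, sub_self, if_pos rfl]
        · ring
        rw [if_neg (sub_ne_zero.mpr fun h ↦ hne (hφ hi' hi h.symm)), Nat.cast_zero, mul_zero]
    _ = _ := by rw [← mul_sum]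

end AddChar

namespace ZMod

lemma sum_range_natCast {M : Type*} [AddCommMonoid M] (N : ℕ) [NeZero N] (f : ZMod N → M) :
    ∑ k ∈ range N, f k = ∑ j, f j :=
  sum_nbij' (fun k ↦ k) val (fun _ _ ↦ mem_univ _) (fun j _ ↦ mem_range.2 j.val_lt)
    (fun _ hk ↦ val_cast_of_lt (mem_range.1 hk)) (fun j _ ↦ natCast_zmod_val j) fun _ _ ↦ rfl

lemma natCast_finVal_injective (N : ℕ) : Function.Injective fun n : Fin N ↦ ((n : ℕ) : ZMod N) := by
  intro n n' h
  have h' := congrArg val h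
  rwa [val_cast_of_lt n.isLt, val_cast_of_lt n'.isLt, ← Fin.ext_iff] at h'

lemma addOrderOf_natCast_mul {q d : ℕ} (hqd : q * d ≠ 0) (k : ℕ) :
    addOrderOf ((k * d : ℕ) : ZMod (q * d)) = q / q.gcd k := by
  rw [addOrderOf_coe _ hqd, Nat.gcd_mul_right,
    Nat.mul_div_mul_right _ _ (Nat.pos_of_ne_zero (right_ne_zero_of_mul hqd))]

lemma sum_Icc_coprime_eq_sum_addOrderOf {M : Type*} [AddCommMonoid M] {q d : ℕ}
    [NeZero (q * d)] (g : ZMod (q * d) → M) :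
    ∑ k ∈ (Icc 1 q).filter (fun k => Nat.gcd k q = 1), g ((k * d : ℕ) : ZMod (q * d)) =
      ∑ j : ZMod (q * d) with addOrderOf j = q, g j := by
  have hq : q ≠ 0 := left_ne_zero_of_mul (NeZero.ne (q * d))
  have hd : d ≠ 0 := right_ne_zero_of_mul (NeZero.ne (q * d))
  have hcop : ∀ k, addOrderOf ((k * d : ℕ) : ZMod (q * d)) = q ↔ Nat.gcd k q = 1 := by
    intro k
    rw [addOrderOf_natCast_mul (NeZero.ne _), Nat.div_eq_self, Nat.gcd_comm]
    simp [hq]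
  refine sum_nbij (fun k ↦ ((k * d : ℕ) : ZMod (q * d))) ?_ ?_ ?_ fun _ _ ↦ rfl
  · intro k hk
    simp only [mem_filter, mem_univ, true_and] at hk ⊢
    exact (hcop k).2 hk.2
  · intro k hk k' hk' h
    simp only [coe_filter, mem_Icc, Set.mem_ofPred_eq] at hk hk'
    refine Nat.ModEq.eq_of_abs_lt (Nat.ModEq.mul_right_cancel' hd
      ((natCast_eq_natCast_iff _ _ _).1 h)) ?_
    rw [abs_lt]
    omega
  · intro j hj
    simp only [coe_filter, mem_univ, true_and, Set.mem_ofPred_eq] at hj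
    -- `q • j = 0` in `ZMod (q * d)` forces `d ∣ j.val`.
    obtain ⟨k, hk⟩ : d ∣ j.val := by
      have h := addOrderOf_nsmul_eq_zero j
      rw [hj, ← natCast_zmod_val j, nsmul_eq_mul, ← Nat.cast_mul, natCast_eq_zero_iff] at h
      exact Nat.dvd_of_mul_dvd_mul_left (Nat.pos_of_ne_zero hq) h
    have hj' : j = ((k * d : ℕ) : ZMod (q * d)) := by
      rw [← natCast_zmod_val j, hk, mul_comm d]
    have hk' : Nat.gcd k q = 1 := (hcop k).1 (hj' ▸ hj)
    have hkq : k < q := by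
      have := val_lt j
      rw [hk, mul_comm q] at this
      exact Nat.lt_of_mul_lt_mul_left this
    rcases Nat.eq_zero_or_pos k with rfl | hk0
    · obtain rfl : q = 1 := by simpa using hk'
      refine ⟨1, by simp, ?_⟩
      rw [hj', zero_mul, Nat.cast_zero]
      exact natCast_self _
    · exact ⟨k, mem_filter.2 ⟨mem_Icc.2 ⟨hk0, hkq.le⟩, hk'⟩, hj'.symm⟩

end ZMod

lemma ramanujanSum_eq_sum_addOrderOf {N q : ℕ} [NeZero N] (hq : q ∣ N) (m : ℤ) :
    ramanujanSum q m = ∑ j : ZMod N with addOrderOf j = q, ZMod.stdAddChar (j * (m : ZMod N)) := by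
  obtain ⟨d, rfl⟩ := hq
  have hq0 : (q : ℂ) ≠ 0 := by exact_mod_cast left_ne_zero_of_mul (NeZero.ne (q * d))
  have hd0 : (d : ℂ) ≠ 0 := by exact_mod_cast right_ne_zero_of_mul (NeZero.ne (q * d))
  rw [ramanujanSum, ← ZMod.sum_Icc_coprime_eq_sum_addOrderOf]
  refine sum_congr rfl fun k _ ↦ ?_
  have hcast : ((k * d : ℕ) : ZMod (q * d)) * (m : ZMod (q * d)) = ((k * d * m : ℤ) : ZMod _) := by
    push_cast
    rfl
  rw [hcast, ZMod.stdAddChar_coe]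
  congr 1
  push_cast
  field_simp

lemma sum_mul_conj_ramanujanSum_sub {N q : ℕ} [NeZero N] (hq : q ∣ N) (x : Fin N → ℂ) (k : ℕ) :
    ∑ n : Fin N, x n * starRingEnd ℂ (ramanujanSum q ((n : ℤ) - (k : ℤ))) =
      ∑ j : ZMod N with addOrderOf j = q,
        (∑ n : Fin N, x n * ZMod.stdAddChar (-((n : ℕ) : ZMod N) * j)) *
          ZMod.stdAddChar (j * (k : ZMod N)) := by
  simp_rw [ramanujanSum_eq_sum_addOrderOf hq, map_sum, AddChar.conj_apply, mul_sum, sum_mul]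
  rw [sum_comm]
  refine sum_congr rfl fun j _ ↦ sum_congr rfl fun n _ ↦ ?_
  rw [mul_assoc, ← AddChar.map_add_eq_mul]
  congr 2
  push_cast
  ring

theorem ramanujanSum_tight_frame (N : ℕ) (hN : 0 < N) (x : Fin N → ℂ) :
    ∑ q ∈ N.divisors, ∑ k ∈ Finset.range N,
      ‖∑ n : Fin N, x n * (starRingEnd ℂ) (ramanujanSum q ((n : ℤ) - (k : ℤ)))‖ ^ 2 =
    (N : ℝ) ^ 2 * ∑ n : Fin N, ‖x n‖ ^ 2 := by
  have : NeZero N := ⟨hN.ne'⟩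
  have hψ := ZMod.isPrimitive_stdAddChar N
  set X : ZMod N → ℂ := fun j ↦ ∑ n : Fin N, x n * ZMod.stdAddChar (-((n : ℕ) : ZMod N) * j)
  calc _ = ∑ q ∈ N.divisors, ∑ k : ZMod N,
        ‖∑ j : ZMod N with addOrderOf j = q, X j * ZMod.stdAddChar (j * k)‖ ^ 2 := by
        refine sum_congr rfl fun q hq ↦ ?_
        simp_rw [sum_mul_conj_ramanujanSum_sub (Nat.dvd_of_mem_divisors hq)]
        rw [← ZMod.sum_range_natCast]
    _ = N * ∑ q ∈ N.divisors, ∑ j : ZMod N with addOrderOf j = q, ‖X j‖ ^ 2 := by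
        rw [mul_sum]
        refine sum_congr rfl fun q _ ↦ ?_
        simpa only [ZMod.card, id_eq] using
          hψ.sum_norm_sq_sum_mul_apply_mul (φ := id) (Set.injOn_id _) X
    _ = N * ∑ j, ‖X j‖ ^ 2 := by
        rw [sum_fiberwise_of_maps_to fun j _ ↦ Nat.mem_divisors.2
          ⟨by simpa only [ZMod.card] using addOrderOf_dvd_card (x := j), NeZero.ne N⟩]
    _ = (N : ℝ) ^ 2 * ∑ n : Fin N, ‖x n‖ ^ 2 := by
        rw [hψ.sum_norm_sq_sum_mul_apply_mul (φ := fun n : Fin N ↦ -((n : ℕ) : ZMod N))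
          (neg_injective.comp (ZMod.natCast_finVal_injective N)).injOn, ZMod.card]
        ring
end

section
/- (Shifted Ramanujan sums span orthogonal subspaces) Let N be a positive integer and q ≠ q' two distinct divisors of N. Then for all shifts l, m ∈ Z, the vectors L_l c_q and L_m c_{q'} in ℓ²(Z_N) are orthogonal: Σ_{n=0}^{N−1} c_q(n−l)·c_{q'}(n−m) = 0. -/
open Finset Complex

/-! Each term `c_q(n - l) c_{q'}(n - m)` of the expanded product is a sum of terms
`ζ^(n-l) ξ^(n-m)` with `ζ`, `ξ` primitive roots of unity of the distinct orders `q`, `q'`.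
Summed over `n`, such a term is a geometric sum in `ζ ξ`, which is an `N`-th root of unity
different from `1`: `ζ ξ = 1` would make `ξ = ζ⁻¹` a primitive `q`-th root. -/

theorem sum_range_pow_eq_zero_of_pow_eq_one {K : Type*} [DivisionRing K] {w : K} {N : ℕ}
    (hw : w ≠ 1) (hwN : w ^ N = 1) : ∑ n ∈ range N, w ^ n = 0 := by
  rw [geom_sum_eq hw, hwN, sub_self, zero_div]

theorem IsPrimitiveRoot.mul_ne_one {G : Type*} [DivisionCommMonoid G] {ζ ξ : G} {q q' : ℕ}
    (hζ : IsPrimitiveRoot ζ q) (hξ : IsPrimitiveRoot ξ q') (hne : q ≠ q') : ζ * ξ ≠ 1 := by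
  intro h
  rw [eq_inv_of_mul_eq_one_right h] at hξ
  exact hne (hζ.inv.unique hξ)

theorem IsPrimitiveRoot.sum_range_zpow_sub_mul_zpow_sub_eq_zero {K : Type*} [Field K]
    {ζ ξ : K} {q q' N : ℕ} (hζ : IsPrimitiveRoot ζ q) (hξ : IsPrimitiveRoot ξ q')
    (hne : q ≠ q') (hq : q ∣ N) (hq' : q' ∣ N) (l m : ℤ) :
    ∑ n ∈ range N, ζ ^ ((n : ℤ) - l) * ξ ^ ((n : ℤ) - m) = 0 := by
  rcases N.eq_zero_or_pos with rfl | hN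
  · simp
  have hζ0 : ζ ≠ 0 := hζ.ne_zero (Nat.pos_of_dvd_of_pos hq hN).ne'
  have hξ0 : ξ ≠ 0 := hξ.ne_zero (Nat.pos_of_dvd_of_pos hq' hN).ne'
  have hterm : ∀ n : ℕ,
      ζ ^ ((n : ℤ) - l) * ξ ^ ((n : ℤ) - m) = (ζ * ξ) ^ n * (ζ ^ (-l) * ξ ^ (-m)) := by
    intro n
    rw [zpow_sub₀ hζ0, zpow_sub₀ hξ0, zpow_neg, zpow_neg, zpow_natCast, zpow_natCast, mul_pow]
    ring
  have hN_root : (ζ * ξ) ^ N = 1 := by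
    rw [mul_pow, (hζ.pow_eq_one_iff_dvd N).2 hq, (hξ.pow_eq_one_iff_dvd N).2 hq', one_mul]
  simp_rw [hterm, ← sum_mul]
  rw [sum_range_pow_eq_zero_of_pow_eq_one (hζ.mul_ne_one hξ hne) hN_root, zero_mul]

theorem ramanujanSum_eq_sum_zpow (q : ℕ) (n : ℤ) :
    ramanujanSum q n = ∑ k ∈ (Icc 1 q).filter (fun k => Nat.gcd k q = 1),
      exp (2 * Real.pi * I * (k / q)) ^ n := by
  refine sum_congr rfl fun k _ => ?_
  rw [← exp_int_mul]
  ring_nf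

theorem isPrimitiveRoot_exp_of_mem_filter_coprime {q k : ℕ}
    (hk : k ∈ (Icc 1 q).filter (fun k => Nat.gcd k q = 1)) :
    IsPrimitiveRoot (exp (2 * Real.pi * I * (k / q))) q := by
  simp only [mem_filter, mem_Icc] at hk
  exact isPrimitiveRoot_exp_of_coprime k q (by omega) hk.2

theorem ramanujanSum_shifts_orthogonal_general (N q q' : ℕ)
    (hq : q ∣ N) (hq' : q' ∣ N) (hne : q ≠ q') (l m : ℤ) :
    ∑ n ∈ Finset.range N,
      ramanujanSum q ((n : ℤ) - l) * ramanujanSum q' ((n : ℤ) - m) = 0 := by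
  simp_rw [ramanujanSum_eq_sum_zpow, sum_mul_sum]
  rw [sum_comm]
  refine sum_eq_zero fun k hk => ?_
  rw [sum_comm]
  refine sum_eq_zero fun k' hk' => ?_
  exact (isPrimitiveRoot_exp_of_mem_filter_coprime hk).sum_range_zpow_sub_mul_zpow_sub_eq_zero
    (isPrimitiveRoot_exp_of_mem_filter_coprime hk') hne hq hq' l m

theorem ramanujanSum_shifts_orthogonal (N q q' : ℕ) (hN : 0 < N)
    (hq : q ∣ N) (hq' : q' ∣ N) (hne : q ≠ q') (l m : ℤ) :
    ∑ n ∈ Finset.range N,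
      ramanujanSum q ((n : ℤ) - l) * ramanujanSum q' ((n : ℤ) - m) = 0 :=
  ramanujanSum_shifts_orthogonal_general N q q' hq hq' hne l m
end
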